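/- Let v, w be unit vectors in ℝ³ with (v·w)² ≠ 1 and let n̂ be the normalization of v × w. Then n̂ ⊗ n̂ = I − (v ⊗ w + w ⊗ v)/(1 + v·w) − ((v − w) ⊗ (v − w))/(1 − (v·w)²). -/

import Mathlib

/-!
Since `n̂ ⊗ n̂ = (v × w) ⊗ (v × w) / ‖v × w‖²`, everything follows from Lagrange's identity and its
outer-product form, which writes `(v × w) ⊗ (v × w)` in terms of `I`, `v ⊗ w + w ⊗ v`, `v ⊗ v`
and `w ⊗ w`. For unit vectors the claim then reduces to comparing scalar coefficients.
-/

open Matrix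

/-- Euclidean norm on ℝ³. -/
noncomputable def enorm (v : Fin 3 → ℝ) : ℝ := Real.sqrt (v ⬝ᵥ v)

/-- Cross product on ℝ³. -/
def cross3 (a b : Fin 3 → ℝ) : Fin 3 → ℝ :=
  ![a 1 * b 2 - a 2 * b 1, a 2 * b 0 - a 0 * b 2, a 0 * b 1 - a 1 * b 0]

/-- Skew-symmetric cross-product matrix [v]ₓ. -/
def crossMat (v : Fin 3 → ℝ) : Matrix (Fin 3) (Fin 3) ℝ :=
  !![0, -v 2, v 1; v 2, 0, -v 0; -v 1, v 0, 0]

/-- Normalization x̂ = x / ‖x‖. -/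
noncomputable def hat (x : Fin 3 → ℝ) : Fin 3 → ℝ := (_root_.enorm x)⁻¹ • x

/-- Frobenius norm of a 3×3 matrix. -/
noncomputable def frobNorm (M : Matrix (Fin 3) (Fin 3) ℝ) : ℝ :=
  Real.sqrt (∑ i, ∑ j, (M i j) ^ 2)

lemma cross3_eq_crossProduct (a b : Fin 3 → ℝ) : cross3 a b = a ⨯₃ b := rfl

lemma dotProduct_self_eq_one_of_enorm_eq_one {v : Fin 3 → ℝ} (hv : _root_.enorm v = 1) :
    v ⬝ᵥ v = 1 :=
  Real.sqrt_eq_one.mp hv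

lemma vecMulVec_hat_self (x : Fin 3 → ℝ) :
    vecMulVec (hat x) (hat x) = (x ⬝ᵥ x)⁻¹ • vecMulVec x x := by
  have hnonneg : 0 ≤ x ⬝ᵥ x := by simpa using dotProduct_self_star_nonneg x
  rw [hat, smul_vecMulVec, vecMulVec_smul, smul_smul, _root_.enorm, ← mul_inv,
    Real.mul_self_sqrt hnonneg]

lemma cross_dot_cross_self {R : Type*} [CommRing R] (u v : Fin 3 → R) :
    (u ⨯₃ v) ⬝ᵥ (u ⨯₃ v) = (u ⬝ᵥ u) * (v ⬝ᵥ v) - (u ⬝ᵥ v) ^ 2 := by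
  rw [cross_dot_cross, dotProduct_comm v u]
  ring

lemma vecMulVec_cross_self {R : Type*} [CommRing R] (u v : Fin 3 → R) :
    vecMulVec (u ⨯₃ v) (u ⨯₃ v) =
      ((u ⬝ᵥ u) * (v ⬝ᵥ v) - (u ⬝ᵥ v) ^ 2) • (1 : Matrix (Fin 3) (Fin 3) R)
        + (u ⬝ᵥ v) • (vecMulVec u v + vecMulVec v u)
        - (v ⬝ᵥ v) • vecMulVec u u - (u ⬝ᵥ u) • vecMulVec v v := by
  ext i j
  fin_cases i <;> fin_cases j <;>
    simp [vecMulVec, cross_apply, dotProduct, Fin.sum_univ_three] <;> ring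

lemma vecMulVec_sub_self {R : Type*} [CommRing R] {n : Type*} (u v : n → R) :
    vecMulVec (u - v) (u - v) =
      vecMulVec u u - (vecMulVec u v + vecMulVec v u) + vecMulVec v v := by
  rw [sub_vecMulVec, vecMulVec_sub, vecMulVec_sub]
  abel

theorem normal_dyadic_formula' (v w : Fin 3 → ℝ)
    (hv : _root_.enorm v = 1) (hw : _root_.enorm w = 1) (h : (v ⬝ᵥ w) ^ 2 ≠ 1) :
    vecMulVec (hat (cross3 v w)) (hat (cross3 v w)) =
      1 - (1 / (1 + v ⬝ᵥ w)) • (vecMulVec v w + vecMulVec w v) -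
        (1 / (1 - (v ⬝ᵥ w) ^ 2)) • vecMulVec (v - w) (v - w) := by
  have hvv := dotProduct_self_eq_one_of_enorm_eq_one hv
  have hww := dotProduct_self_eq_one_of_enorm_eq_one hw
  have hsq : 1 - (v ⬝ᵥ w) ^ 2 ≠ 0 := sub_ne_zero.mpr h.symm
  have hplus : 1 + v ⬝ᵥ w ≠ 0 := fun h0 => hsq (by linear_combination (1 - v ⬝ᵥ w) * h0)
  rw [vecMulVec_hat_self, cross3_eq_crossProduct, cross_dot_cross_self, vecMulVec_cross_self,
    vecMulVec_sub_self, hvv, hww]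
  match_scalars <;> field_simp <;> ring
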